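/- arXiv:2505.20946 — 2 statements merged into one kernel-verified Lean document; each statement's English description precedes it below -/
import Mathlib

section
/- Suppose −(k + d)(2λ_j + 3k + d) > 0 for all j = 1,…,p, and let β ∈ ℝ^p. Then MMSE_LTE − MMSE_AULTE is positive definite if and only if b_AULTEᵀ (S₁ + b_LTE b_LTEᵀ)⁻¹ b_AULTE < 1, where S₁ = Cov_LTE − Cov_AULTE. -/
open Matrix

/-- Covariance matrix of the Liu-type estimator (LTE). -/
noncomputable def covLTE {p : ℕ} (V : Matrix (Fin p) (Fin p) ℝ) (k d : ℝ) :
    Matrix (Fin p) (Fin p) ℝ :=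
  (V + k • 1)⁻¹ * (V - d • 1) * V⁻¹ * (V - d • 1) * (V + k • 1)⁻¹

/-- Covariance matrix of the almost unbiased Liu-type estimator (AULTE). -/
noncomputable def covAULTE {p : ℕ} (V : Matrix (Fin p) (Fin p) ℝ) (k d : ℝ) :
    Matrix (Fin p) (Fin p) ℝ :=
  (1 - (k + d) ^ 2 • ((V + k • 1)⁻¹) ^ 2) * V⁻¹ * (1 - (k + d) ^ 2 • ((V + k • 1)⁻¹) ^ 2)

/-- The matrix `M` entering the modified almost unbiased Liu-type estimator (MAULTE). -/
noncomputable def mMAULTE {p : ℕ} (V : Matrix (Fin p) (Fin p) ℝ) (k d : ℝ) :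
    Matrix (Fin p) (Fin p) ℝ :=
  (1 - (k + d) ^ 2 • ((V + k • 1)⁻¹) ^ 2) * (1 - (k + d) • (V + k • 1)⁻¹)

/-- Covariance matrix of the MAULTE. -/
noncomputable def covMAULTE {p : ℕ} (V : Matrix (Fin p) (Fin p) ℝ) (k d : ℝ) :
    Matrix (Fin p) (Fin p) ℝ :=
  mMAULTE V k d * V⁻¹ * (mMAULTE V k d)ᵀ

/-- Bias vector of the LTE. -/
noncomputable def biasLTE {p : ℕ} (V : Matrix (Fin p) (Fin p) ℝ) (k d : ℝ) (β : Fin p → ℝ) :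
    Fin p → ℝ :=
  (-(d + k)) • ((V + k • 1)⁻¹ *ᵥ β)

/-- Bias vector of the AULTE. -/
noncomputable def biasAULTE {p : ℕ} (V : Matrix (Fin p) (Fin p) ℝ) (k d : ℝ) (β : Fin p → ℝ) :
    Fin p → ℝ :=
  (-(d + k) ^ 2) • (((V + k • 1)⁻¹) ^ 2 *ᵥ β)

/-- Bias vector of the MAULTE. -/
noncomputable def biasMAULTE {p : ℕ} (V : Matrix (Fin p) (Fin p) ℝ) (k d : ℝ) (β : Fin p → ℝ) :
    Fin p → ℝ :=
  (-(d + k)) •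
    (((1 + (d + k) • (V + k • 1)⁻¹ - (d + k) ^ 2 • ((V + k • 1)⁻¹) ^ 2) * (V + k • 1)⁻¹) *ᵥ β)

/-- Matrix mean squared error built from a covariance matrix and a bias vector. -/
noncomputable def mmse {p : ℕ} (C : Matrix (Fin p) (Fin p) ℝ) (b : Fin p → ℝ) :
    Matrix (Fin p) (Fin p) ℝ :=
  C + vecMulVec b b


/-!
Writing `V = Q D Qᵀ` with `D = diagonal λ`, both covariances are rational functions of `V`, so
`S₁ = Cov_LTE − Cov_AULTE` is `Q` times a diagonal matrix times `Qᵀ`, with entries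
`(λ_j − d)² · (−(k + d)(2λ_j + 3k + d)) / (λ_j (λ_j + k)⁴)`. These are positive under the
hypothesis, so `A = S₁ + b_LTE b_LTEᵀ` is positive definite, and the difference of the MMSE matrices
is the rank-one update `A − b_AULTE b_AULTEᵀ`. For positive definite `A`, `A − u uᵀ` is positive
definite iff `uᵀ A⁻¹ u < 1`: with `w = A⁻¹ u`, necessity comes from evaluating the form at `w`,
sufficiency from Cauchy–Schwarz for the inner product `⟨x, y⟩ = xᵀ A y`, which gives
`(xᵀ u)² ≤ (xᵀ A x)(uᵀ A⁻¹ u)`.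
-/

namespace Matrix

section QuadraticForm

variable {n : Type*} [Fintype n] {A : Matrix n n ℝ}

theorem posSemidef_vecMulVec_self (u : n → ℝ) : (vecMulVec u u).PosSemidef := by
  simpa using posSemidef_vecMulVec_self_star u

theorem dotProduct_vecMulVec_self_mulVec (u x : n → ℝ) :
    x ⬝ᵥ vecMulVec u u *ᵥ x = (x ⬝ᵥ u) ^ 2 := by
  rw [vecMulVec_mulVec, op_smul_eq_smul, dotProduct_smul, smul_eq_mul, dotProduct_comm, sq]

theorem PosSemidef.dotProduct_mulVec_sq_le (hA : A.PosSemidef) (x y : n → ℝ) :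
    (x ⬝ᵥ A *ᵥ y) ^ 2 ≤ (x ⬝ᵥ A *ᵥ x) * (y ⬝ᵥ A *ᵥ y) := by
  have hsymm : y ⬝ᵥ A *ᵥ x = x ⬝ᵥ A *ᵥ y := by
    rw [dotProduct_mulVec, ← mulVec_transpose, dotProduct_comm,
      ← conjTranspose_eq_transpose_of_trivial, hA.isHermitian.eq]
  have hquad : ∀ s : ℝ,
      0 ≤ (y ⬝ᵥ A *ᵥ y) * (s * s) + 2 * (x ⬝ᵥ A *ᵥ y) * s + x ⬝ᵥ A *ᵥ x := fun s => by
    have := hA.dotProduct_mulVec_nonneg (x + s • y)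
    simp only [star_trivial, mulVec_add, mulVec_smul, add_dotProduct, dotProduct_add,
      smul_dotProduct, dotProduct_smul, smul_eq_mul, hsymm] at this
    linarith
  have hdiscrim := discrim_le_zero hquad
  rw [discrim] at hdiscrim
  nlinarith

theorem PosDef.sub_vecMulVec_iff [DecidableEq n] (hA : A.PosDef) (u : n → ℝ) :
    (A - vecMulVec u u).PosDef ↔ u ⬝ᵥ A⁻¹ *ᵥ u < 1 := by
  set w := A⁻¹ *ᵥ u
  have hAw : A *ᵥ w = u := by
    rw [mulVec_mulVec, mul_nonsing_inv _ ((isUnit_iff_isUnit_det A).mp hA.isUnit), one_mulVec]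
  have hform : ∀ x, x ⬝ᵥ (A - vecMulVec u u) *ᵥ x = x ⬝ᵥ A *ᵥ x - (x ⬝ᵥ A *ᵥ w) ^ 2 :=
    fun x => by rw [sub_mulVec, dotProduct_sub, dotProduct_vecMulVec_self_mulVec, hAw]
  have hw_form : u ⬝ᵥ w = w ⬝ᵥ A *ᵥ w := by rw [hAw, dotProduct_comm]
  rw [hw_form]
  constructor
  · intro hpos
    by_cases hu : u = 0
    · simp [w, hu]
    have hw : w ≠ 0 := fun hw => hu (by rw [← hAw, hw, mulVec_zero])
    have hsub := hpos.dotProduct_mulVec_pos hw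
    have hA_w := hA.dotProduct_mulVec_pos hw
    simp only [star_trivial, hform] at hsub hA_w
    nlinarith
  · intro hlt
    refine .of_dotProduct_mulVec_pos
      (hA.isHermitian.sub (posSemidef_vecMulVec_self u).isHermitian) fun x hx => ?_
    have hA_x := hA.dotProduct_mulVec_pos hx
    have hcs := hA.posSemidef.dotProduct_mulVec_sq_le x w
    simp only [star_trivial] at hA_x ⊢
    rw [hform]
    nlinarith

end QuadraticForm

variable {n m R : Type*} [Fintype n] [DecidableEq n] [Fintype m] [DecidableEq m] [CommRing R]

theorem map_nonsing_inv {F : Type*} [EquivLike F (Matrix n n R) (Matrix m m R)]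
    [RingEquivClass F (Matrix n n R) (Matrix m m R)] (f : F) (A : Matrix n n R) :
    f A⁻¹ = (f A)⁻¹ := by
  by_cases hA : IsUnit A
  · refine (inv_eq_left_inv ?_).symm
    rw [← map_mul, nonsing_inv_mul _ ((isUnit_iff_isUnit_det A).mp hA), map_one]
  · have hfA : ¬IsUnit (f A) := (isUnit_map_iff f A).not.mpr hA
    rw [nonsing_inv_eq_ringInverse, nonsing_inv_eq_ringInverse, Ring.inverse_non_unit _ hA,
      Ring.inverse_non_unit _ hfA, map_zero]

theorem inv_diagonal_of_ne_zero {K : Type*} [Field K] {v : n → K} (hv : ∀ i, v i ≠ 0) :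
    (diagonal v)⁻¹ = diagonal v⁻¹ :=
  inv_eq_left_inv (by simp [diagonal_mul_diagonal, hv])

end Matrix

section Estimators

variable {p : ℕ} {k d : ℝ}

theorem covLTE_map (f : Matrix (Fin p) (Fin p) ℝ ≃ₐ[ℝ] Matrix (Fin p) (Fin p) ℝ)
    (V : Matrix (Fin p) (Fin p) ℝ) : covLTE (f V) k d = f (covLTE V k d) := by
  simp only [covLTE, map_mul, map_sub, map_add, map_smul, map_one, map_nonsing_inv]

theorem covAULTE_map (f : Matrix (Fin p) (Fin p) ℝ ≃ₐ[ℝ] Matrix (Fin p) (Fin p) ℝ)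
    (V : Matrix (Fin p) (Fin p) ℝ) : covAULTE (f V) k d = f (covAULTE V k d) := by
  simp only [covAULTE, map_mul, map_sub, map_add, map_smul, map_one, map_pow, map_nonsing_inv]

theorem covLTE_sub_covAULTE_diagonal {lam : Fin p → ℝ} (hlam : ∀ j, lam j ≠ 0)
    (hlamk : ∀ j, lam j + k ≠ 0) :
    covLTE (diagonal lam) k d - covAULTE (diagonal lam) k d =
      diagonal fun j => (lam j - d) ^ 2 * (-(k + d) * (2 * lam j + 3 * k + d)) /
        (lam j * (lam j + k) ^ 4) := by
  have hshift (c : ℝ) : diagonal lam + c • 1 = diagonal fun j => lam j + c := by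
    rw [smul_one_eq_diagonal, diagonal_add]
  rw [covLTE, covAULTE, hshift, sub_eq_add_neg (diagonal lam), ← neg_smul, hshift,
    inv_diagonal_of_ne_zero hlamk, inv_diagonal_of_ne_zero hlam]
  simp only [← diagonal_one, ← diagonal_smul, diagonal_pow, diagonal_mul_diagonal, diagonal_sub]
  congr 1
  funext j
  simp only [Pi.smul_apply, Pi.pow_apply, Pi.inv_apply, smul_eq_mul]
  field_simp [hlam j, hlamk j]
  ring

theorem posDef_covLTE_sub_covAULTE {Q : Matrix (Fin p) (Fin p) ℝ} (hQ : Q * Qᵀ = 1)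
    {lam : Fin p → ℝ} (hlam : ∀ j, 0 < lam j) (hk : 0 < k)
    (h : ∀ j, 0 < -(k + d) * (2 * lam j + 3 * k + d)) :
    (covLTE (Q * diagonal lam * Qᵀ) k d - covAULTE (Q * diagonal lam * Qᵀ) k d).PosDef := by
  have hentry : ∀ j, 0 < (lam j - d) ^ 2 * (-(k + d) * (2 * lam j + 3 * k + d)) /
      (lam j * (lam j + k) ^ 4) := fun j => by
    have hlamj := hlam j
    -- if `k + d ≥ 0` then `2λ_j + 3k + d > 0`, and the product in `h j` would be `≤ 0`
    have hkd : k + d < 0 := by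
      by_contra! hkd
      nlinarith [h j]
    have hd : d < lam j := by linarith
    exact div_pos (mul_pos (pow_pos (sub_pos.mpr hd) 2) (h j)) (by positivity)
  have hstar : star Q = Qᵀ := by rw [star_eq_conjTranspose, conjTranspose_eq_transpose_of_trivial]
  have hQ_unitary : Q ∈ unitaryGroup (Fin p) ℝ := by rwa [mem_unitaryGroup_iff, hstar]
  have hQ_unit : IsUnit Q := Unitary.isUnit_coe (U := ⟨Q, hQ_unitary⟩)
  set conjQ := (Unitary.conjStarAlgAut ℝ _ ⟨Q, hQ_unitary⟩).toAlgEquiv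
  have hconjQ (X : Matrix (Fin p) (Fin p) ℝ) : conjQ X = Q * X * Qᵀ := by
    simp [conjQ, hstar]
  rw [← hconjQ, covLTE_map, covAULTE_map, ← map_sub,
    covLTE_sub_covAULTE_diagonal (fun j => (hlam j).ne') (fun j => (add_pos (hlam j) hk).ne'),
    hconjQ, ← hstar, IsUnit.posDef_star_right_conjugate_iff hQ_unit]
  exact .diagonal hentry

end Estimators

theorem mmse_sub_mmse {p : ℕ} (C₁ C₂ : Matrix (Fin p) (Fin p) ℝ) (b₁ b₂ : Fin p → ℝ) :
    mmse C₁ b₁ - mmse C₂ b₂ = C₁ - C₂ + vecMulVec b₁ b₁ - vecMulVec b₂ b₂ := by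
  unfold mmse
  abel

/-- MMSE comparison of LTE and AULTE. -/
theorem mmseLTE_sub_mmseAULTE_posDef_iff (p : ℕ) (Q : Matrix (Fin p) (Fin p) ℝ)
    (hQ : Q * Qᵀ = 1) (lam : Fin p → ℝ) (hlam : ∀ j, 0 < lam j) (k d : ℝ) (hk : 0 < k)
    (h : ∀ j, -(k + d) * (2 * lam j + 3 * k + d) > 0) (β : Fin p → ℝ) :
    (mmse (covLTE (Q * Matrix.diagonal lam * Qᵀ) k d)
        (biasLTE (Q * Matrix.diagonal lam * Qᵀ) k d β) -
      mmse (covAULTE (Q * Matrix.diagonal lam * Qᵀ) k d)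
        (biasAULTE (Q * Matrix.diagonal lam * Qᵀ) k d β)).PosDef ↔
      biasAULTE (Q * Matrix.diagonal lam * Qᵀ) k d β ⬝ᵥ
        ((covLTE (Q * Matrix.diagonal lam * Qᵀ) k d -
            covAULTE (Q * Matrix.diagonal lam * Qᵀ) k d) +
          Matrix.vecMulVec (biasLTE (Q * Matrix.diagonal lam * Qᵀ) k d β)
            (biasLTE (Q * Matrix.diagonal lam * Qᵀ) k d β))⁻¹ *ᵥ
        biasAULTE (Q * Matrix.diagonal lam * Qᵀ) k d β < 1 := by
  rw [mmse_sub_mmse]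
  exact ((posDef_covLTE_sub_covAULTE hQ hlam hk h).add_posSemidef
    (posSemidef_vecMulVec_self _)).sub_vecMulVec_iff _
end

section
/- Suppose that for every j = 1,…,p one has |d + k| < √2·(λ_j + k), that d ≠ −k, that d ≠ λ_j for all j, and let β ∈ ℝ^p. Then MMSE_LTE − MMSE_MAULTE is positive definite if and only if b_MAULTEᵀ (S₂ + b_LTE b_LTEᵀ)⁻¹ b_MAULTE < 1, where S₂ = Cov_LTE − Cov_MAULTE. -/
open Matrix

/-! All matrices involved are functions of `V = Q Λ Qᵀ`, hence diagonal in the basis `Q`. Writing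
`a = (k + d) / (λ + k)` for an eigenvalue `λ` of `V`, the covariance of the LTE acts there as
`(1 - a)² / λ` and that of the MAULTE as `((1 - a²)(1 - a))² / λ`; the hypotheses say exactly
`a ≠ 0`, `a ≠ 1` and `a² < 2`, which make `S₂ = Cov_LTE - Cov_MAULTE` positive definite. Then
`MMSE_LTE - MMSE_MAULTE = A - b bᵀ` with `A = S₂ + b_LTE b_LTEᵀ ≻ 0` and `b = b_MAULTE`, and
`A - b bᵀ ≻ 0 ↔ bᵀ A⁻¹ b < 1` by the Cauchy–Schwarz inequality for the inner product of `A`. -/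

namespace Matrix

variable {n : Type*} [Fintype n]

theorem IsHermitian.dotProduct_mulVec_comm {A : Matrix n n ℝ} (hA : A.IsHermitian)
    (x y : n → ℝ) : x ⬝ᵥ A *ᵥ y = y ⬝ᵥ A *ᵥ x := by
  rw [← dotProduct_transpose_mulVec, ← conjTranspose_eq_transpose_of_trivial, hA.eq]

theorem PosSemidef.sq_dotProduct_mulVec_le {A : Matrix n n ℝ} (hA : A.PosSemidef)
    (x y : n → ℝ) : (x ⬝ᵥ A *ᵥ y) ^ 2 ≤ (x ⬝ᵥ A *ᵥ x) * (y ⬝ᵥ A *ᵥ y) := by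
  let := A.toSeminormedAddCommGroup hA
  let := A.toInnerProductSpace hA
  have cauchySchwarz := real_inner_mul_inner_self_le y x
  change (A *ᵥ x) ⬝ᵥ star y * ((A *ᵥ x) ⬝ᵥ star y)
    ≤ (A *ᵥ y) ⬝ᵥ star y * ((A *ᵥ x) ⬝ᵥ star x) at cauchySchwarz
  simp only [star_trivial, dotProduct_comm (A *ᵥ _)] at cauchySchwarz
  rw [hA.1.dotProduct_mulVec_comm x y, sq]
  linarith

variable [DecidableEq n]

theorem PosDef.sub_vecMulVec_posDef_iff {A : Matrix n n ℝ} (hA : A.PosDef) (b : n → ℝ) :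
    (A - vecMulVec b b).PosDef ↔ b ⬝ᵥ A⁻¹ *ᵥ b < 1 := by
  have quadForm (x : n → ℝ) :
      x ⬝ᵥ (A - vecMulVec b b) *ᵥ x = x ⬝ᵥ A *ᵥ x - (b ⬝ᵥ x) ^ 2 := by
    rw [sub_mulVec, dotProduct_sub, vecMulVec_mulVec, dotProduct_smul, op_smul_eq_mul,
      dotProduct_comm x b, sq]
  set c := A⁻¹ *ᵥ b
  have hAc : A *ᵥ c = b := by
    rw [mulVec_mulVec, mul_nonsing_inv _ ((isUnit_iff_isUnit_det A).mp hA.isUnit), one_mulVec]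
  have dot_eq (x : n → ℝ) : c ⬝ᵥ A *ᵥ x = b ⬝ᵥ x := by
    rw [hA.1.dotProduct_mulVec_comm, hAc, dotProduct_comm]
  constructor
  · intro hPD
    by_cases hb : b = 0
    · simp [hb]
    have hc : c ≠ 0 := fun hc => hb (by rw [← hAc, hc, mulVec_zero])
    -- at `x = A⁻¹ b` the form equals `s - s²` with `s = bᵀ A⁻¹ b`, and `s - s² > 0` forces `s < 1`
    have hform := hPD.dotProduct_mulVec_pos hc
    rw [star_trivial, quadForm, dot_eq] at hform
    nlinarith
  · intro hlt
    refine .of_dotProduct_mulVec_pos (hA.1.sub (posSemidef_vecMulVec_self_star b).1) ?_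
    intro x hx
    rw [star_trivial, quadForm]
    have hpos : 0 < x ⬝ᵥ A *ᵥ x := by simpa using hA.dotProduct_mulVec_pos hx
    have cauchySchwarz := hA.posSemidef.sq_dotProduct_mulVec_le c x
    rw [dot_eq, dot_eq] at cauchySchwarz
    nlinarith

open Unitary

noncomputable def conjDiagonal (U : orthogonalGroup n ℝ) : (n → ℝ) →ₐ[ℝ] Matrix n n ℝ :=
  (conjStarAlgAut ℝ (Matrix n n ℝ) U).toAlgEquiv.toAlgHom.comp (diagonalAlgHom ℝ)

variable (U : orthogonalGroup n ℝ)

theorem conjDiagonal_apply (μ : n → ℝ) :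
    conjDiagonal U μ = U * diagonal μ * (U : Matrix n n ℝ)ᵀ :=
  rfl

theorem conjDiagonal_transpose (μ : n → ℝ) : (conjDiagonal U μ)ᵀ = conjDiagonal U μ := by
  simp [conjDiagonal_apply, Matrix.mul_assoc]

theorem conjDiagonal_inv {μ : n → ℝ} (hμ : ∀ j, μ j ≠ 0) :
    (conjDiagonal U μ)⁻¹ = conjDiagonal U μ⁻¹ := by
  refine inv_eq_left_inv ?_
  rw [← map_mul, ← map_one (conjDiagonal U)]
  congr 1
  ext j
  simp [hμ j]

theorem conjDiagonal_posDef_iff {μ : n → ℝ} : (conjDiagonal U μ).PosDef ↔ ∀ j, 0 < μ j := by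
  simp [conjDiagonal, isUnit_coe.posDef_star_right_conjugate_iff, posDef_diagonal_iff]

end Matrix

theorem div_sq_lt_of_abs_lt_sqrt_mul {x y c : ℝ} (h : |x| < √c * y) : (x / y) ^ 2 < c := by
  have hpos : 0 < √c * y := (abs_nonneg x).trans_lt h
  have hy : 0 < y := pos_of_mul_pos_right hpos (Real.sqrt_nonneg c)
  have hc : 0 < c := Real.sqrt_pos.mp (pos_of_mul_pos_left hpos hy.le)
  rw [div_pow, div_lt_iff₀ (by positivity), ← sq_abs, ← Real.sq_sqrt hc.le, ← mul_pow]
  exact pow_lt_pow_left₀ h (abs_nonneg x) two_ne_zero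

theorem sq_one_sub_sq_mul_one_sub_lt {a : ℝ} (ha₀ : a ≠ 0) (ha₁ : a ≠ 1) (ha₂ : a ^ 2 < 2) :
    ((1 - a ^ 2) * (1 - a)) ^ 2 < (1 - a) ^ 2 := by
  have hsq : (1 - a ^ 2) ^ 2 < 1 := by
    nlinarith [mul_pos (sq_pos_of_ne_zero ha₀) (sub_pos.mpr ha₂)]
  rw [mul_pow]
  exact mul_lt_of_lt_one_left (sq_pos_of_ne_zero (sub_ne_zero.mpr ha₁.symm)) hsq

section Estimators

variable {p : ℕ} (U : orthogonalGroup (Fin p) ℝ) {lam : Fin p → ℝ} {k d : ℝ}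

theorem covLTE_conjDiagonal (hlam : ∀ j, lam j ≠ 0) (hlk : ∀ j, lam j + k ≠ 0) :
    covLTE (conjDiagonal U lam) k d
      = conjDiagonal U (fun j => (1 - (k + d) / (lam j + k)) ^ 2 / lam j) := by
  have hk : conjDiagonal U lam + k • 1 = conjDiagonal U (lam + k • 1) := by simp
  have hd : conjDiagonal U lam - d • 1 = conjDiagonal U (lam - d • 1) := by simp
  rw [covLTE, hk, hd, conjDiagonal_inv U hlam, conjDiagonal_inv U (by simpa using hlk)]
  simp only [← map_mul]
  congr 1
  ext j
  have hlkj := hlk j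
  simp only [Pi.mul_apply, Pi.inv_apply, Pi.add_apply, Pi.smul_apply, Pi.one_apply, smul_eq_mul,
    mul_one, Pi.sub_apply]
  field_simp
  ring

theorem mMAULTE_conjDiagonal (hlk : ∀ j, lam j + k ≠ 0) :
    mMAULTE (conjDiagonal U lam) k d
      = conjDiagonal U (fun j =>
          (1 - ((k + d) / (lam j + k)) ^ 2) * (1 - (k + d) / (lam j + k))) := by
  have hk : conjDiagonal U lam + k • 1 = conjDiagonal U (lam + k • 1) := by simp
  rw [mMAULTE, hk, conjDiagonal_inv U (by simpa using hlk)]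
  simp only [← map_pow, ← map_smul, ← map_one (conjDiagonal U), ← map_sub, ← map_mul]
  congr 1
  ext j
  simp [div_eq_mul_inv, mul_pow]

theorem covMAULTE_conjDiagonal (hlam : ∀ j, lam j ≠ 0) (hlk : ∀ j, lam j + k ≠ 0) :
    covMAULTE (conjDiagonal U lam) k d
      = conjDiagonal U (fun j =>
          ((1 - ((k + d) / (lam j + k)) ^ 2) * (1 - (k + d) / (lam j + k))) ^ 2 / lam j) := by
  rw [covMAULTE, mMAULTE_conjDiagonal U hlk, conjDiagonal_transpose, conjDiagonal_inv U hlam,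
    ← map_mul, ← map_mul]
  congr 1
  ext j
  simp only [Pi.mul_apply, Pi.inv_apply]
  ring

theorem covLTE_sub_covMAULTE_posDef (hlam : ∀ j, 0 < lam j)
    (h : ∀ j, |d + k| < √2 * (lam j + k)) (hdk : d ≠ -k) (hdl : ∀ j, d ≠ lam j) :
    (covLTE (conjDiagonal U lam) k d - covMAULTE (conjDiagonal U lam) k d).PosDef := by
  have hlk (j : Fin p) : 0 < lam j + k :=
    pos_of_mul_pos_right ((abs_nonneg _).trans_lt (h j)) (by positivity)
  rw [covLTE_conjDiagonal U (fun j => (hlam j).ne') (fun j => (hlk j).ne'),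
    covMAULTE_conjDiagonal U (fun j => (hlam j).ne') (fun j => (hlk j).ne'), ← map_sub,
    conjDiagonal_posDef_iff]
  intro j
  have ha₀ : (k + d) / (lam j + k) ≠ 0 := div_ne_zero (by contrapose! hdk; linarith) (hlk j).ne'
  have ha₁ : (k + d) / (lam j + k) ≠ 1 := by
    rw [Ne, div_eq_one_iff_eq (hlk j).ne']
    contrapose! hdl
    exact ⟨j, by linarith⟩
  have ha₂ : ((k + d) / (lam j + k)) ^ 2 < 2 := div_sq_lt_of_abs_lt_sqrt_mul (add_comm d k ▸ h j)
  exact sub_pos.mpr (div_lt_div_of_pos_right (sq_one_sub_sq_mul_one_sub_lt ha₀ ha₁ ha₂) (hlam j))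

end Estimators

theorem mmseLTE_sub_mmseMAULTE_posDef_iff_general (p : ℕ) (Q : Matrix (Fin p) (Fin p) ℝ)
    (hQ : Q * Qᵀ = 1) (lam : Fin p → ℝ) (hlam : ∀ j, 0 < lam j) (k d : ℝ)
    (h : ∀ j, |d + k| < Real.sqrt 2 * (lam j + k))
    (hdk : d ≠ -k) (hdl : ∀ j, d ≠ lam j) (β : Fin p → ℝ) :
    (mmse (covLTE (Q * Matrix.diagonal lam * Qᵀ) k d)
        (biasLTE (Q * Matrix.diagonal lam * Qᵀ) k d β) -
      mmse (covMAULTE (Q * Matrix.diagonal lam * Qᵀ) k d)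
        (biasMAULTE (Q * Matrix.diagonal lam * Qᵀ) k d β)).PosDef ↔
      biasMAULTE (Q * Matrix.diagonal lam * Qᵀ) k d β ⬝ᵥ
        ((covLTE (Q * Matrix.diagonal lam * Qᵀ) k d -
            covMAULTE (Q * Matrix.diagonal lam * Qᵀ) k d) +
          Matrix.vecMulVec (biasLTE (Q * Matrix.diagonal lam * Qᵀ) k d β)
            (biasLTE (Q * Matrix.diagonal lam * Qᵀ) k d β))⁻¹ *ᵥ
        biasMAULTE (Q * Matrix.diagonal lam * Qᵀ) k d β < 1 := by
  let U : orthogonalGroup (Fin p) ℝ := ⟨Q, (mem_orthogonalGroup_iff (Fin p) ℝ).mpr hQ⟩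
  have hV : Q * diagonal lam * Qᵀ = conjDiagonal U lam := rfl
  have hS := covLTE_sub_covMAULTE_posDef U hlam h hdk hdl
  rw [hV, mmse_sub_mmse]
  exact PosDef.sub_vecMulVec_posDef_iff (hS.add_posSemidef (posSemidef_vecMulVec_self_star _)) _

/-- MMSE comparison of LTE and MAULTE. -/
theorem mmseLTE_sub_mmseMAULTE_posDef_iff (p : ℕ) (Q : Matrix (Fin p) (Fin p) ℝ)
    (hQ : Q * Qᵀ = 1) (lam : Fin p → ℝ) (hlam : ∀ j, 0 < lam j) (k d : ℝ) (hk : 0 < k)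
    (h : ∀ j, |d + k| < Real.sqrt 2 * (lam j + k))
    (hdk : d ≠ -k) (hdl : ∀ j, d ≠ lam j) (β : Fin p → ℝ) :
    (mmse (covLTE (Q * Matrix.diagonal lam * Qᵀ) k d)
        (biasLTE (Q * Matrix.diagonal lam * Qᵀ) k d β) -
      mmse (covMAULTE (Q * Matrix.diagonal lam * Qᵀ) k d)
        (biasMAULTE (Q * Matrix.diagonal lam * Qᵀ) k d β)).PosDef ↔
      biasMAULTE (Q * Matrix.diagonal lam * Qᵀ) k d β ⬝ᵥ
        ((covLTE (Q * Matrix.diagonal lam * Qᵀ) k d -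
            covMAULTE (Q * Matrix.diagonal lam * Qᵀ) k d) +
          Matrix.vecMulVec (biasLTE (Q * Matrix.diagonal lam * Qᵀ) k d β)
            (biasLTE (Q * Matrix.diagonal lam * Qᵀ) k d β))⁻¹ *ᵥ
        biasMAULTE (Q * Matrix.diagonal lam * Qᵀ) k d β < 1 :=
  mmseLTE_sub_mmseMAULTE_posDef_iff_general p Q hQ lam hlam k d h hdk hdl β
end
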